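/- arXiv:2411.09554 — 5 statements merged into one kernel-verified Lean document; each statement's English description precedes it below -/
import Mathlib

section
/- (Theorem 3.1, main identity.) Let y^t be a flow vector with all components nonnegative, and set α^t_{ℓk} = q_{ℓk}(y^t) for all ℓ ∈ L and k ∈ K. For ℓ ∈ L, j ∈ J, k ∈ K define the DR linearization σ_{ℓjk}(y) = α^t_{ℓk} · yLJ_{ℓj} + (yLJ^t_{ℓj} / ∑_{r∈J} yLJ^t_{ℓr}) · (∑_{i∈I} λ_{ik} yIL_{iℓ} − α^t_{ℓk} · ∑_{r∈J} yLJ_{ℓr}) if ∑_{r∈J} yLJ^t_{ℓr} > 0, and σ_{ℓjk}(y) = 0 otherwise; and define the Taylor linearization τ_{ℓjk}(y) = q_{ℓk}(y^t) · yLJ^t_{ℓj} + D[y ↦ q_{ℓk}(y) · yLJ_{ℓj}](y^t)(y − y^t) (the Fréchet derivative of the function y ↦ q_{ℓk}(y)·yLJ_{ℓj} at y^t applied to y − y^t) if ∑_{r∈J} yLJ^t_{ℓr} > 0, and τ_{ℓjk}(y) = 0 otherwise. Then σ_{ℓjk}(y) = τ_{ℓjk}(y) for every flow vector y and all ℓ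 ∈ L, j ∈ J, k ∈ K. -/
/-!
Where the outflow of pool `ℓ` is positive, `y ↦ q_{ℓk}(y) · yLJ_{ℓj}` is `N y / D y * P y` for
the linear functionals `N` (quality-weighted inflow), `D` (outflow) and `P` (flow on the arc `ℓj`).
Its derivative at `x` is `v ↦ α P v + (P x / D x) (N v - α D v)` with `α = N x / D x`, which is
already the DR linearization; the constant terms of the Taylor expansion cancel since `N x = α D x`.
-/

open scoped BigOperators

/-- A flow vector on the complete tripartite pooling network. -/
abbrev FlowVec (I L J : Type*) : Type _ :=
  (I → L → ℝ) × (I → J → ℝ) × (L → J → ℝ)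

/-- The pool quality `q_{ℓk}(y)`. -/
noncomputable def poolQuality {I L J K : Type*} [Fintype I] [Fintype J]
    (lam : I → K → ℝ) (ℓ : L) (k : K) (y : FlowVec I L J) : ℝ :=
  if 0 < ∑ j, y.2.2 ℓ j then (∑ i, lam i k * y.1 i ℓ) / (∑ j, y.2.2 ℓ j) else 0

open Filter Topology ContinuousLinearMap

section RatioTimesLinear

variable {E : Type*} [NormedAddCommGroup E] [NormedSpace ℝ E] (N D P : E →L[ℝ] ℝ) {x : E}

theorem hasFDerivAt_div_mul (hx : D x ≠ 0) :
    HasFDerivAt (fun z => N z / D z * P z)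
      ((N x / D x) • P + (P x / D x) • (N - (N x / D x) • D)) x := by
  have hinv := (hasDerivAt_inv hx).comp_hasFDerivAt x D.hasFDerivAt
  have h := (N.hasFDerivAt.mul hinv).mul P.hasFDerivAt
  refine (h.congr_fderiv ?_).congr_of_eventuallyEq (.of_forall fun z => ?_)
  · ext v
    simp only [Pi.mul_apply, Function.comp_apply, smul_eq_mul, neg_smul, smul_neg, smul_add,
      add_apply, smul_apply, neg_apply, sub_apply]
    field_simp
    ring
  · simp [div_eq_mul_inv]

theorem div_mul_add_fderiv_sub (hx : D x ≠ 0) (y : E) :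
    N x / D x * P x + fderiv ℝ (fun z => N z / D z * P z) x (y - x) =
      N x / D x * P y + P x / D x * (N y - N x / D x * D y) := by
  rw [(hasFDerivAt_div_mul N D P hx).fderiv]
  simp only [add_apply, smul_apply, sub_apply, smul_eq_mul, map_sub]
  field_simp
  ring

end RatioTimesLinear

namespace FlowVec

variable {I L J : Type*}

noncomputable def arcFlow (ℓ : L) (j : J) : FlowVec I L J →L[ℝ] ℝ :=
  proj j ∘L proj ℓ ∘L snd ℝ _ _ ∘L snd ℝ _ _

noncomputable def outflow [Fintype J] (ℓ : L) : FlowVec I L J →L[ℝ] ℝ :=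
  ∑ r, arcFlow ℓ r

noncomputable def weightedInflow [Fintype I] (c : I → ℝ) (ℓ : L) : FlowVec I L J →L[ℝ] ℝ :=
  ∑ i, c i • (proj ℓ ∘L (proj i : (I → L → ℝ) →L[ℝ] L → ℝ) ∘L fst ℝ _ _)

@[simp] theorem arcFlow_apply (ℓ : L) (j : J) (y : FlowVec I L J) :
    arcFlow ℓ j y = y.2.2 ℓ j := rfl

@[simp] theorem outflow_apply [Fintype J] (ℓ : L) (y : FlowVec I L J) :
    outflow ℓ y = ∑ r, y.2.2 ℓ r := by
  simp [outflow]

@[simp] theorem weightedInflow_apply [Fintype I] (c : I → ℝ) (ℓ : L) (y : FlowVec I L J) :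
    weightedInflow c ℓ y = ∑ i, c i * y.1 i ℓ := by
  simp [weightedInflow]

variable [Fintype I] [Fintype J] {K : Type*} (lam : I → K → ℝ) (ℓ : L) (k : K)

theorem poolQuality_eq_div {y : FlowVec I L J} (hy : 0 < outflow ℓ y) :
    poolQuality lam ℓ k y = weightedInflow (lam · k) ℓ y / outflow ℓ y := by
  simp_all [poolQuality]

theorem poolQuality_eventuallyEq_div {y : FlowVec I L J} (hy : 0 < outflow ℓ y) :
    poolQuality lam ℓ k =ᶠ[𝓝 y] fun z => weightedInflow (lam · k) ℓ z / outflow ℓ z := by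
  filter_upwards [(outflow ℓ).continuous.continuousAt.eventually (eventually_gt_nhds hy)]
    with z hz using poolQuality_eq_div lam ℓ k hz

end FlowVec

open FlowVec

theorem drLin_eq_taylorLin_general
    {I L J K : Type*} [Fintype I] [Fintype L] [Fintype J]
    (lam : I → K → ℝ)
    (yt : FlowVec I L J)
    (αt : L → K → ℝ) (hαt : ∀ ℓ k, αt ℓ k = poolQuality lam ℓ k yt)
    (σ τ : L → J → K → FlowVec I L J → ℝ)
    (hσ : ∀ ℓ j k y, σ ℓ j k y =
      if 0 < ∑ r, yt.2.2 ℓ r then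
        αt ℓ k * y.2.2 ℓ j + (yt.2.2 ℓ j / ∑ r, yt.2.2 ℓ r)
          * ((∑ i, lam i k * y.1 i ℓ) - αt ℓ k * ∑ r, y.2.2 ℓ r)
      else 0)
    (hτ : ∀ ℓ j k y, τ ℓ j k y =
      if 0 < ∑ r, yt.2.2 ℓ r then
        poolQuality lam ℓ k yt * yt.2.2 ℓ j
          + fderiv ℝ (fun z : FlowVec I L J => poolQuality lam ℓ k z * z.2.2 ℓ j) yt (y - yt)
      else 0) :
    ∀ (ℓ : L) (j : J) (k : K) (y : FlowVec I L J), σ ℓ j k y = τ ℓ j k y := by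
  intro ℓ j k y
  rw [hσ, hτ, hαt]
  split_ifs with hpos
  · rw [← outflow_apply] at hpos
    have hq := poolQuality_eventuallyEq_div lam ℓ k hpos
    have hf : (fun z : FlowVec I L J => poolQuality lam ℓ k z * z.2.2 ℓ j) =ᶠ[𝓝 yt]
        fun z => weightedInflow (lam · k) ℓ z / outflow ℓ z * arcFlow ℓ j z :=
      hq.mul (.refl _ _)
    rw [hf.fderiv_eq, hq.eq_of_nhds]
    simpa only [weightedInflow_apply, outflow_apply, arcFlow_apply] using
      (div_mul_add_fderiv_sub (weightedInflow (lam · k) ℓ) _ (arcFlow ℓ j) hpos.ne' y).symm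
  · rfl

/-- Theorem 3.1, main identity: with `α^t = q(y^t)` and `y^t ≥ 0`,
the DR linearization `σ_{ℓjk}` coincides with the Taylor linearization `τ_{ℓjk}`. -/
theorem drLin_eq_taylorLin
    {I L J K : Type*} [Fintype I] [Fintype L] [Fintype J]
    [Nonempty I] [Nonempty L] [Nonempty J] [Nonempty K]
    (lam : I → K → ℝ)
    (yt : FlowVec I L J)
    (hyt1 : ∀ i ℓ, 0 ≤ yt.1 i ℓ) (hyt2 : ∀ i j, 0 ≤ yt.2.1 i j)
    (hyt3 : ∀ ℓ j, 0 ≤ yt.2.2 ℓ j)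
    (αt : L → K → ℝ) (hαt : ∀ ℓ k, αt ℓ k = poolQuality lam ℓ k yt)
    (σ τ : L → J → K → FlowVec I L J → ℝ)
    (hσ : ∀ ℓ j k y, σ ℓ j k y =
      if 0 < ∑ r, yt.2.2 ℓ r then
        αt ℓ k * y.2.2 ℓ j + (yt.2.2 ℓ j / ∑ r, yt.2.2 ℓ r)
          * ((∑ i, lam i k * y.1 i ℓ) - αt ℓ k * ∑ r, y.2.2 ℓ r)
      else 0)
    (hτ : ∀ ℓ j k y, τ ℓ j k y =
      if 0 < ∑ r, yt.2.2 ℓ r then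
        poolQuality lam ℓ k yt * yt.2.2 ℓ j
          + fderiv ℝ (fun z : FlowVec I L J => poolQuality lam ℓ k z * z.2.2 ℓ j) yt (y - yt)
      else 0) :
    ∀ (ℓ : L) (j : J) (k : K) (y : FlowVec I L J), σ ℓ j k y = τ ℓ j k y :=
  drLin_eq_taylorLin_general lam yt αt hαt σ τ hσ hτ
end

section
/- (Theorem 3.1, equivalence of the LP approximation problems.) Let y^t be a flow vector with all components nonnegative, set α^t_{ℓk} = q_{ℓk}(y^t), and let σ_{ℓjk} and τ_{ℓjk} be the DR and Taylor linearizations at y^t (defined in the context). Then a flow vector y satisfies the DR output-quality constraints ∑_{i∈I} λ_{ik} yIJ_{ij} + ∑_{ℓ∈L} σ_{ℓjk}(y) ≥ λmin_{jk} · (∑_{i∈I} yIJ_{ij} + ∑_{ℓ∈L} yLJ_{ℓj}) and ∑_{i∈I} λ_{ik} yIJ_{ij} + ∑_{ℓ∈L} σ_{ℓjk}(y) ≤ λmax_{jk} · (∑_{i∈I} yIJ_{ij} + ∑_{ℓ∈L} yLJ_{ℓj}) for all j ∈ J, k ∈ K if and only if y satisfies the same constraints with σ_{ℓjk}(y) replaced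 by τ_{ℓjk}(y). Consequently, the set of flow vectors satisfying the base linear constraints together with the σ-constraints equals the set of flow vectors satisfying the base linear constraints together with the τ-constraints, and the supremum of the objective ∑_{(i,ℓ)} w^{IL}_{iℓ} yIL_{iℓ} + ∑_{(i,j)} w^{IJ}_{ij} yIJ_{ij} + ∑_{(ℓ,j)} w^{LJ}_{ℓj} yLJ_{ℓj} over the two sets coincides. -/
open scoped BigOperators

/-- The base linear constraints of the pooling problem: flow conservation at pools,
node capacities, and arc bounds. -/
def baseCons {I L J : Type*} [Fintype I] [Fintype L] [Fintype J]
    (uI : I → ℝ) (uL : L → ℝ) (uJ : J → ℝ)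
    (uIL : I → L → ℝ) (uIJ : I → J → ℝ) (uLJ : L → J → ℝ)
    (y : FlowVec I L J) : Prop :=
  (∀ ℓ, ∑ i, y.1 i ℓ = ∑ j, y.2.2 ℓ j) ∧
  (∀ i, (∑ ℓ, y.1 i ℓ) + (∑ j, y.2.1 i j) ≤ uI i) ∧
  (∀ ℓ, (∑ j, y.2.2 ℓ j) ≤ uL ℓ) ∧
  (∀ j, (∑ i, y.2.1 i j) + (∑ ℓ, y.2.2 ℓ j) ≤ uJ j) ∧
  (∀ i ℓ, 0 ≤ y.1 i ℓ ∧ y.1 i ℓ ≤ uIL i ℓ) ∧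
  (∀ i j, 0 ≤ y.2.1 i j ∧ y.2.1 i j ≤ uIJ i j) ∧
  (∀ ℓ j, 0 ≤ y.2.2 ℓ j ∧ y.2.2 ℓ j ≤ uLJ ℓ j)

/-- The DR linearization `σ_{ℓjk}` at the base point `y^t` with pool quality estimates `α^t`. -/
noncomputable def drLin {I L J K : Type*} [Fintype I] [Fintype J]
    (lam : I → K → ℝ) (αt : L → K → ℝ) (yt : FlowVec I L J)
    (ℓ : L) (j : J) (k : K) (y : FlowVec I L J) : ℝ :=
  if 0 < ∑ r, yt.2.2 ℓ r then
    αt ℓ k * y.2.2 ℓ j + (yt.2.2 ℓ j / ∑ r, yt.2.2 ℓ r)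
      * ((∑ i, lam i k * y.1 i ℓ) - αt ℓ k * ∑ r, y.2.2 ℓ r)
  else 0

/-- The Taylor linearization `τ_{ℓjk}` of `y ↦ q_{ℓk}(y)·yLJ_{ℓj}` at the base point `y^t`. -/
noncomputable def taylorLin {I L J K : Type*} [Fintype I] [Fintype L] [Fintype J]
    (lam : I → K → ℝ) (yt : FlowVec I L J)
    (ℓ : L) (j : J) (k : K) (y : FlowVec I L J) : ℝ :=
  if 0 < ∑ r, yt.2.2 ℓ r then
    poolQuality lam ℓ k yt * yt.2.2 ℓ j
      + fderiv ℝ (fun z : FlowVec I L J => poolQuality lam ℓ k z * z.2.2 ℓ j) yt (y - yt)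
  else 0

/-! Near a base point where pool `ℓ` has positive outflow, `y ↦ q_{ℓk}(y) · yLJ_{ℓj}` is
`N / D · P` for the linear maps `N = ∑ᵢ λᵢₖ yIL_{iℓ}`, `D = ∑ᵣ yLJ_{ℓr}`, `P = yLJ_{ℓj}`.
The first-order Taylor expansion of `N / D · P` at `x` is
`q P(y) + P(x)/D(x) · (N(y) - q D(y)) - P(x)/D(x) · (N(x) - q D(x))` with `q = N(x)/D(x)`,
and the last term vanishes: this is the DR linearization. So `σ = τ` pointwise, and the two
constraint systems, feasible sets and optimal values coincide. -/

open ContinuousLinearMap in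
theorem div_mul_add_fderiv_div_mul {E : Type*} [NormedAddCommGroup E] [NormedSpace ℝ E]
    (N D P : E →L[ℝ] ℝ) {x : E} (hx : D x ≠ 0) (y : E) :
    N x / D x * P x + fderiv ℝ (fun z => N z / D z * P z) x (y - x)
      = N x / D x * P y + P x / D x * (N y - N x / D x * D y) := by
  have h := (N.hasFDerivAt.fun_mul ((hasFDerivAt_inv hx).comp x D.hasFDerivAt)).fun_mul
    P.hasFDerivAt
  simp only [Function.comp_apply, ← div_eq_mul_inv] at h
  rw [h.fderiv]
  simp only [smul_add, add_apply, smul_apply, map_sub, smul_eq_mul, comp_apply,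
    toSpanSingleton_apply, mul_neg]
  field_simp
  ring

namespace FlowVec

open ContinuousLinearMap

variable {I L J K : Type*}

noncomputable def poolOutArc (ℓ : L) (j : J) : FlowVec I L J →L[ℝ] ℝ :=
  (proj j).comp ((proj ℓ).comp ((snd ℝ (I → J → ℝ) (L → J → ℝ)).comp
    (snd ℝ (I → L → ℝ) ((I → J → ℝ) × (L → J → ℝ)))))

noncomputable def poolOutflow [Fintype J] (ℓ : L) : FlowVec I L J →L[ℝ] ℝ :=
  ∑ r, poolOutArc ℓ r

noncomputable def poolAttributeInflow [Fintype I] (lam : I → K → ℝ) (ℓ : L) (k : K) :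
    FlowVec I L J →L[ℝ] ℝ :=
  ∑ i, lam i k • (proj ℓ).comp ((proj i).comp (fst ℝ (I → L → ℝ) ((I → J → ℝ) × (L → J → ℝ))))

@[simp] theorem poolOutArc_apply (ℓ : L) (j : J) (z : FlowVec I L J) :
    poolOutArc ℓ j z = z.2.2 ℓ j := rfl

@[simp] theorem poolOutflow_apply [Fintype J] (ℓ : L) (z : FlowVec I L J) :
    poolOutflow ℓ z = ∑ r, z.2.2 ℓ r := by
  simp [poolOutflow, sum_apply]

@[simp] theorem poolAttributeInflow_apply [Fintype I] (lam : I → K → ℝ) (ℓ : L) (k : K)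
    (z : FlowVec I L J) : poolAttributeInflow lam ℓ k z = ∑ i, lam i k * z.1 i ℓ := by
  simp [poolAttributeInflow, sum_apply]

end FlowVec

open FlowVec

theorem poolQuality_mul_eventuallyEq {I L J K : Type*} [Fintype I] [Fintype J]
    (lam : I → K → ℝ) {yt : FlowVec I L J} {ℓ : L} (hyt : 0 < ∑ r, yt.2.2 ℓ r) (j : J) (k : K) :
    (fun z : FlowVec I L J => poolQuality lam ℓ k z * z.2.2 ℓ j) =ᶠ[nhds yt]
      fun z => (∑ i, lam i k * z.1 i ℓ) / (∑ r, z.2.2 ℓ r) * z.2.2 ℓ j := by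
  have hcont : ContinuousAt (fun z : FlowVec I L J => ∑ r, z.2.2 ℓ r) yt := by fun_prop
  filter_upwards [hcont.eventually (eventually_gt_nhds hyt)] with z hz
  rw [poolQuality, if_pos hz]

theorem taylorLin_eq_drLin {I L J K : Type*} [Fintype I] [Fintype L] [Fintype J]
    (lam : I → K → ℝ) (yt : FlowVec I L J) (ℓ : L) (j : J) (k : K) (y : FlowVec I L J) :
    taylorLin lam yt ℓ j k y = drLin lam (fun ℓ k => poolQuality lam ℓ k yt) yt ℓ j k y := by
  by_cases hyt : 0 < ∑ r, yt.2.2 ℓ r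
  · have key := div_mul_add_fderiv_div_mul (poolAttributeInflow lam ℓ k) (poolOutflow ℓ)
      (poolOutArc ℓ j) (x := yt) (by simpa using hyt.ne') y
    simp only [poolAttributeInflow_apply, poolOutflow_apply, poolOutArc_apply] at key
    rw [taylorLin, drLin, if_pos hyt, if_pos hyt,
      (poolQuality_mul_eventuallyEq lam hyt j k).fderiv_eq, poolQuality, if_pos hyt]
    exact key
  · simp [taylorLin, drLin, hyt]

theorem dr_slpF_subproblems_equivalent_general
    {I L J K : Type*} [Fintype I] [Fintype L] [Fintype J]
    (lam : I → K → ℝ) (lamin lamax : J → K → ℝ)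
    (uI : I → ℝ) (uL : L → ℝ) (uJ : J → ℝ)
    (uIL : I → L → ℝ) (uIJ : I → J → ℝ) (uLJ : L → J → ℝ)
    (wIL : I → L → ℝ) (wIJ : I → J → ℝ) (wLJ : L → J → ℝ)
    (yt : FlowVec I L J)
    (αt : L → K → ℝ) (hαt : ∀ ℓ k, αt ℓ k = poolQuality lam ℓ k yt)
    (σcons τcons : FlowVec I L J → Prop)
    (hσ : ∀ y, σcons y ↔ ∀ (j : J) (k : K),
        lamin j k * ((∑ i, y.2.1 i j) + ∑ ℓ, y.2.2 ℓ j)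
          ≤ (∑ i, lam i k * y.2.1 i j) + ∑ ℓ, drLin lam αt yt ℓ j k y ∧
        (∑ i, lam i k * y.2.1 i j) + (∑ ℓ, drLin lam αt yt ℓ j k y)
          ≤ lamax j k * ((∑ i, y.2.1 i j) + ∑ ℓ, y.2.2 ℓ j))
    (hτ : ∀ y, τcons y ↔ ∀ (j : J) (k : K),
        lamin j k * ((∑ i, y.2.1 i j) + ∑ ℓ, y.2.2 ℓ j)
          ≤ (∑ i, lam i k * y.2.1 i j) + ∑ ℓ, taylorLin lam yt ℓ j k y ∧
        (∑ i, lam i k * y.2.1 i j) + (∑ ℓ, taylorLin lam yt ℓ j k y)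
          ≤ lamax j k * ((∑ i, y.2.1 i j) + ∑ ℓ, y.2.2 ℓ j)) :
    (∀ y, σcons y ↔ τcons y) ∧
    {y : FlowVec I L J | baseCons uI uL uJ uIL uIJ uLJ y ∧ σcons y}
      = {y : FlowVec I L J | baseCons uI uL uJ uIL uIJ uLJ y ∧ τcons y} ∧
    sSup ((fun y : FlowVec I L J =>
          (∑ i, ∑ ℓ, wIL i ℓ * y.1 i ℓ) + (∑ i, ∑ j, wIJ i j * y.2.1 i j)
            + ∑ ℓ, ∑ j, wLJ ℓ j * y.2.2 ℓ j) ''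
        {y : FlowVec I L J | baseCons uI uL uJ uIL uIJ uLJ y ∧ σcons y})
      = sSup ((fun y : FlowVec I L J =>
          (∑ i, ∑ ℓ, wIL i ℓ * y.1 i ℓ) + (∑ i, ∑ j, wIJ i j * y.2.1 i j)
            + ∑ ℓ, ∑ j, wLJ ℓ j * y.2.2 ℓ j) ''
        {y : FlowVec I L J | baseCons uI uL uJ uIL uIJ uLJ y ∧ τcons y}) := by
  obtain rfl : αt = fun ℓ k => poolQuality lam ℓ k yt := funext fun ℓ => funext (hαt ℓ)
  have hcons : ∀ y, σcons y ↔ τcons y := fun y => by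
    simp only [hσ, hτ, taylorLin_eq_drLin]
  have hfeasible : {y : FlowVec I L J | baseCons uI uL uJ uIL uIJ uLJ y ∧ σcons y}
      = {y : FlowVec I L J | baseCons uI uL uJ uIL uIJ uLJ y ∧ τcons y} := by
    simp only [hcons]
  exact ⟨hcons, hfeasible, by rw [hfeasible]⟩

/-- Theorem 3.1, equivalence of the LP approximation problems:
the DR output-quality constraints and the Taylor output-quality constraints at `y^t`
are satisfied by exactly the same flow vectors; consequently the feasible regions of
the two LP approximation problems coincide, and the suprema of the linear objective
over the two feasible regions coincide. -/
theorem dr_slpF_subproblems_equivalent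
    {I L J K : Type*} [Fintype I] [Fintype L] [Fintype J]
    [Nonempty I] [Nonempty L] [Nonempty J] [Nonempty K]
    (lam : I → K → ℝ) (lamin lamax : J → K → ℝ)
    (uI : I → ℝ) (uL : L → ℝ) (uJ : J → ℝ)
    (uIL : I → L → ℝ) (uIJ : I → J → ℝ) (uLJ : L → J → ℝ)
    (wIL : I → L → ℝ) (wIJ : I → J → ℝ) (wLJ : L → J → ℝ)
    (yt : FlowVec I L J)
    (hyt1 : ∀ i ℓ, 0 ≤ yt.1 i ℓ) (hyt2 : ∀ i j, 0 ≤ yt.2.1 i j)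
    (hyt3 : ∀ ℓ j, 0 ≤ yt.2.2 ℓ j)
    (αt : L → K → ℝ) (hαt : ∀ ℓ k, αt ℓ k = poolQuality lam ℓ k yt)
    (σcons τcons : FlowVec I L J → Prop)
    (hσ : ∀ y, σcons y ↔ ∀ (j : J) (k : K),
        lamin j k * ((∑ i, y.2.1 i j) + ∑ ℓ, y.2.2 ℓ j)
          ≤ (∑ i, lam i k * y.2.1 i j) + ∑ ℓ, drLin lam αt yt ℓ j k y ∧
        (∑ i, lam i k * y.2.1 i j) + (∑ ℓ, drLin lam αt yt ℓ j k y)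
          ≤ lamax j k * ((∑ i, y.2.1 i j) + ∑ ℓ, y.2.2 ℓ j))
    (hτ : ∀ y, τcons y ↔ ∀ (j : J) (k : K),
        lamin j k * ((∑ i, y.2.1 i j) + ∑ ℓ, y.2.2 ℓ j)
          ≤ (∑ i, lam i k * y.2.1 i j) + ∑ ℓ, taylorLin lam yt ℓ j k y ∧
        (∑ i, lam i k * y.2.1 i j) + (∑ ℓ, taylorLin lam yt ℓ j k y)
          ≤ lamax j k * ((∑ i, y.2.1 i j) + ∑ ℓ, y.2.2 ℓ j)) :
    (∀ y, σcons y ↔ τcons y) ∧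
    {y : FlowVec I L J | baseCons uI uL uJ uIL uIJ uLJ y ∧ σcons y}
      = {y : FlowVec I L J | baseCons uI uL uJ uIL uIJ uLJ y ∧ τcons y} ∧
    sSup ((fun y : FlowVec I L J =>
          (∑ i, ∑ ℓ, wIL i ℓ * y.1 i ℓ) + (∑ i, ∑ j, wIJ i j * y.2.1 i j)
            + ∑ ℓ, ∑ j, wLJ ℓ j * y.2.2 ℓ j) ''
        {y : FlowVec I L J | baseCons uI uL uJ uIL uIJ uLJ y ∧ σcons y})
      = sSup ((fun y : FlowVec I L J =>
          (∑ i, ∑ ℓ, wIL i ℓ * y.1 i ℓ) + (∑ i, ∑ j, wIJ i j * y.2.1 i j)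
            + ∑ ℓ, ∑ j, wLJ ℓ j * y.2.2 ℓ j) ''
        {y : FlowVec I L J | baseCons uI uL uJ uIL uIJ uLJ y ∧ τcons y}) :=
  dr_slpF_subproblems_equivalent_general lam lamin lamax uI uL uJ uIL uIJ uLJ wIL wIJ wLJ yt αt hαt
    σcons τcons hσ hτ
end

section
/- (Equivalence of the P-formulation and the flow formulation F.) Let y be a flow vector with all components nonnegative that satisfies the flow conservation constraints ∑_{i∈I} yIL_{iℓ} = ∑_{j∈J} yLJ_{ℓj} for all ℓ ∈ L. Then the following are equivalent: (i) for all j ∈ J and k ∈ K, λmin_{jk} · (∑_{i∈I} yIJ_{ij} + ∑_{ℓ∈L} yLJ_{ℓj}) ≤ ∑_{i∈I} λ_{ik} yIJ_{ij} + ∑_{ℓ∈L} q_{ℓk}(y) · yLJ_{ℓj} ≤ λmax_{jk} · (∑_{i∈I} yIJ_{ij} + ∑_{ℓ∈L} yLJ_{ℓj}); (ii) there exists α : L × K → ℝ such that ∑_{i∈I} λ_{ik} yIL_{iℓ} = α_{ℓk} · ∑_{j∈J} yLJ_{ℓj} for all ℓ ∈ L, k ∈ K, and for all j ∈ J, k ∈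 K, λmin_{jk} · (∑_{i∈I} yIJ_{ij} + ∑_{ℓ∈L} yLJ_{ℓj}) ≤ ∑_{i∈I} λ_{ik} yIJ_{ij} + ∑_{ℓ∈L} α_{ℓk} · yLJ_{ℓj} ≤ λmax_{jk} · (∑_{i∈I} yIJ_{ij} + ∑_{ℓ∈L} yLJ_{ℓj}). -/
open scoped BigOperators

/-- equivalence of the P-formulation and the flow formulation F:
for a nonnegative flow vector satisfying flow conservation, the output quality
constraints expressed via the pool qualities `q_{ℓk}(y)` hold iff there exist pool
quality values `α` satisfying the pool material balances and the same output
quality constraints. -/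
theorem flow_formulation_equiv_P_formulation
    {I L J K : Type*} [Fintype I] [Fintype L] [Fintype J]
    [Nonempty I] [Nonempty L] [Nonempty J] [Nonempty K]
    (lam : I → K → ℝ) (lamin lamax : J → K → ℝ)
    (y : FlowVec I L J)
    (hy1 : ∀ i ℓ, 0 ≤ y.1 i ℓ) (hy2 : ∀ i j, 0 ≤ y.2.1 i j)
    (hy3 : ∀ ℓ j, 0 ≤ y.2.2 ℓ j)
    (hcons : ∀ ℓ, ∑ i, y.1 i ℓ = ∑ j, y.2.2 ℓ j) :
    (∀ (j : J) (k : K),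
      lamin j k * ((∑ i, y.2.1 i j) + ∑ ℓ, y.2.2 ℓ j)
        ≤ (∑ i, lam i k * y.2.1 i j) + ∑ ℓ, poolQuality lam ℓ k y * y.2.2 ℓ j ∧
      (∑ i, lam i k * y.2.1 i j) + (∑ ℓ, poolQuality lam ℓ k y * y.2.2 ℓ j)
        ≤ lamax j k * ((∑ i, y.2.1 i j) + ∑ ℓ, y.2.2 ℓ j)) ↔
    (∃ α : L → K → ℝ,
      (∀ (ℓ : L) (k : K), ∑ i, lam i k * y.1 i ℓ = α ℓ k * ∑ j, y.2.2 ℓ j) ∧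
      ∀ (j : J) (k : K),
        lamin j k * ((∑ i, y.2.1 i j) + ∑ ℓ, y.2.2 ℓ j)
          ≤ (∑ i, lam i k * y.2.1 i j) + ∑ ℓ, α ℓ k * y.2.2 ℓ j ∧
        (∑ i, lam i k * y.2.1 i j) + (∑ ℓ, α ℓ k * y.2.2 ℓ j)
          ≤ lamax j k * ((∑ i, y.2.1 i j) + ∑ ℓ, y.2.2 ℓ j)) := by
  have hbal : ∀ (ℓ : L) (k : K),
      ∑ i, lam i k * y.1 i ℓ = poolQuality lam ℓ k y * ∑ j, y.2.2 ℓ j := by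
    intro ℓ k
    unfold poolQuality
    by_cases h : 0 < ∑ j, y.2.2 ℓ j
    · simp [h, div_mul_cancel₀, ne_of_gt h]
    · simp only [h, if_false, zero_mul]
      have hz : ∑ j, y.2.2 ℓ j = 0 := le_antisymm (not_lt.1 h)
        (Finset.sum_nonneg fun j _ => hy3 ℓ j)
      have h1 : ∑ i, y.1 i ℓ = 0 := by rw [hcons ℓ, hz]
      have : ∀ i ∈ Finset.univ, y.1 i ℓ = 0 := by
        intro i _
        exact le_antisymm (by
          have := Finset.single_le_sum (f := fun i => y.1 i ℓ)
            (fun i _ => hy1 i ℓ) (Finset.mem_univ i)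
          linarith) (hy1 i ℓ)
      exact Finset.sum_eq_zero fun i hi => by rw [this i hi, mul_zero]
  constructor
  · intro hP
    exact ⟨fun ℓ k => poolQuality lam ℓ k y, hbal, hP⟩
  · rintro ⟨α, hα, hP⟩
    intro j k
    have key : ∑ ℓ, α ℓ k * y.2.2 ℓ j = ∑ ℓ, poolQuality lam ℓ k y * y.2.2 ℓ j := by
      apply Finset.sum_congr rfl
      intro ℓ _
      by_cases h : 0 < ∑ j', y.2.2 ℓ j'
      · have : α ℓ k = poolQuality lam ℓ k y := by
          have h1 := hα ℓ k
          have h2 := hbal ℓ k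
          have hne : (∑ j', y.2.2 ℓ j') ≠ 0 := ne_of_gt h
          exact mul_right_cancel₀ hne (h1.symm.trans h2)
        rw [this]
      · have hz : ∑ j', y.2.2 ℓ j' = 0 := le_antisymm (not_lt.1 h)
          (Finset.sum_nonneg fun j' _ => hy3 ℓ j')
        have : y.2.2 ℓ j = 0 := le_antisymm (by
          have := Finset.single_le_sum (f := fun j' => y.2.2 ℓ j')
            (fun j' _ => hy3 ℓ j') (Finset.mem_univ j)
          linarith) (hy3 ℓ j)
        simp [this]
    rw [← key]
    exact hP j k
end

section
/- (Equivalence of the SLP and DR linear programming subproblems under positive pool flows.) Let y^t be a flow vector with all components nonnegative such that ∑_{j∈J} yLJ^t_{ℓj} > 0 for every ℓ ∈ L, and let α^t : L × K → ℝ be arbitrary. For ℓ ∈ L, j ∈ J, k ∈ K define σ_{ℓjk}(y) = α^t_{ℓk} · yLJ_{ℓj} + (yLJ^t_{ℓj} / ∑_{r∈J} yLJ^t_{ℓr}) · (∑_{i∈I} λ_{ik} yIL_{iℓ} − α^t_{ℓk} · ∑_{r∈J} yLJ_{ℓr}). Then a flow vector y satisfies, for all j ∈ J and k ∈ K, λmin_{jk}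 · (∑_{i∈I} yIJ_{ij} + ∑_{ℓ∈L} yLJ_{ℓj}) ≤ ∑_{i∈I} λ_{ik} yIJ_{ij} + ∑_{ℓ∈L} σ_{ℓjk}(y) ≤ λmax_{jk} · (∑_{i∈I} yIJ_{ij} + ∑_{ℓ∈L} yLJ_{ℓj}) if and only if there exists α : L × K → ℝ such that ∑_{i∈I} λ_{ik} yIL_{iℓ} = α^t_{ℓk} · ∑_{j∈J} yLJ_{ℓj} + (α_{ℓk} − α^t_{ℓk}) · ∑_{j∈J} yLJ^t_{ℓj} for all ℓ ∈ L, k ∈ K, and for all j ∈ J, k ∈ K, λmin_{jk} · (∑_{i∈I} yIJ_{ij} + ∑_{ℓ∈L} yLJ_{ℓj}) ≤ ∑_{i∈I} λ_{ik} yIJ_{ij} + ∑_{ℓ∈L} (α^t_{ℓk} · yLJ_{ℓj} + yLJ^t_{ℓj} · (α_{ℓk} − α^t_{ℓk})) ≤ λmax_{jk} · (∑_{i∈I} yIJ_{ij} + ∑_{ℓ∈L} yLJ_{ℓj}). -/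
/-!
Because every pool carries positive flow in `yt`, the linearized balance (15) has exactly one
solution `α`, namely `balancedPoolQuality`, and for that `α` the term `yt_ℓj (α_ℓk - αt_ℓk)`
coincides with the correction term of `σ_ℓjk`; so the two systems of quality constraints agree.
-/

open scoped BigOperators

noncomputable def balancedPoolQuality {I L J K : Type*} [Fintype I] [Fintype J]
    (lam : I → K → ℝ) (αt : L → K → ℝ) (yt y : FlowVec I L J) (ℓ : L) (k : K) : ℝ :=
  αt ℓ k + ((∑ i, lam i k * y.1 i ℓ) - αt ℓ k * ∑ j, y.2.2 ℓ j) / ∑ j, yt.2.2 ℓ j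

theorem eq_mul_add_sub_mul_iff {q a a₀ Y s : ℝ} (hs : s ≠ 0) :
    q = a₀ * Y + (a - a₀) * s ↔ a = a₀ + (q - a₀ * Y) / s := by
  rw [← sub_eq_iff_eq_add' (a := a), eq_div_iff hs]
  constructor <;> intro h <;> linarith

theorem mul_add_div_sub_self (w s d a₀ : ℝ) : w * (a₀ + d / s - a₀) = w / s * d := by
  rw [add_sub_cancel_left, mul_div_assoc', mul_div_right_comm]

theorem slp_dr_subproblems_equivalent_general
    {I L J K : Type*} [Fintype I] [Fintype L] [Fintype J]
    (lam : I → K → ℝ) (lamin lamax : J → K → ℝ)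
    (yt : FlowVec I L J)
    (hpos : ∀ ℓ, 0 < ∑ j, yt.2.2 ℓ j)
    (αt : L → K → ℝ)
    (y : FlowVec I L J) :
    (∀ (j : J) (k : K),
      lamin j k * ((∑ i, y.2.1 i j) + ∑ ℓ, y.2.2 ℓ j)
        ≤ (∑ i, lam i k * y.2.1 i j)
          + ∑ ℓ, (αt ℓ k * y.2.2 ℓ j + (yt.2.2 ℓ j / ∑ r, yt.2.2 ℓ r)
              * ((∑ i, lam i k * y.1 i ℓ) - αt ℓ k * ∑ r, y.2.2 ℓ r)) ∧
      (∑ i, lam i k * y.2.1 i j)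
          + (∑ ℓ, (αt ℓ k * y.2.2 ℓ j + (yt.2.2 ℓ j / ∑ r, yt.2.2 ℓ r)
              * ((∑ i, lam i k * y.1 i ℓ) - αt ℓ k * ∑ r, y.2.2 ℓ r)))
        ≤ lamax j k * ((∑ i, y.2.1 i j) + ∑ ℓ, y.2.2 ℓ j)) ↔
    (∃ α : L → K → ℝ,
      (∀ (ℓ : L) (k : K),
        ∑ i, lam i k * y.1 i ℓ
          = αt ℓ k * (∑ j, y.2.2 ℓ j) + (α ℓ k - αt ℓ k) * ∑ j, yt.2.2 ℓ j) ∧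
      ∀ (j : J) (k : K),
        lamin j k * ((∑ i, y.2.1 i j) + ∑ ℓ, y.2.2 ℓ j)
          ≤ (∑ i, lam i k * y.2.1 i j)
            + ∑ ℓ, (αt ℓ k * y.2.2 ℓ j + yt.2.2 ℓ j * (α ℓ k - αt ℓ k)) ∧
        (∑ i, lam i k * y.2.1 i j)
            + (∑ ℓ, (αt ℓ k * y.2.2 ℓ j + yt.2.2 ℓ j * (α ℓ k - αt ℓ k)))
          ≤ lamax j k * ((∑ i, y.2.1 i j) + ∑ ℓ, y.2.2 ℓ j)) := by
  have hbal : ∀ α : L → K → ℝ, (∀ ℓ k, ∑ i, lam i k * y.1 i ℓ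
        = αt ℓ k * (∑ j, y.2.2 ℓ j) + (α ℓ k - αt ℓ k) * ∑ j, yt.2.2 ℓ j) ↔
      α = balancedPoolQuality lam αt yt y := fun α => by
    simp only [funext_iff, eq_mul_add_sub_mul_iff (hpos _).ne', balancedPoolQuality]
  simp only [hbal, exists_eq_left, balancedPoolQuality, mul_add_div_sub_self]

/-- equivalence of the SLP and DR LP subproblems under positive pool
flows: the projected DR output-quality constraints hold at `y` iff there exist
quality values `α` satisfying the linearized pool material balances (15) together
with the linearized output-quality constraints. -/
theorem slp_dr_subproblems_equivalent
    {I L J K : Type*} [Fintype I] [Fintype L] [Fintype J]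
    [Nonempty I] [Nonempty L] [Nonempty J] [Nonempty K]
    (lam : I → K → ℝ) (lamin lamax : J → K → ℝ)
    (yt : FlowVec I L J)
    (hyt1 : ∀ i ℓ, 0 ≤ yt.1 i ℓ) (hyt2 : ∀ i j, 0 ≤ yt.2.1 i j)
    (hyt3 : ∀ ℓ j, 0 ≤ yt.2.2 ℓ j)
    (hpos : ∀ ℓ, 0 < ∑ j, yt.2.2 ℓ j)
    (αt : L → K → ℝ)
    (y : FlowVec I L J) :
    (∀ (j : J) (k : K),
      lamin j k * ((∑ i, y.2.1 i j) + ∑ ℓ, y.2.2 ℓ j)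
        ≤ (∑ i, lam i k * y.2.1 i j)
          + ∑ ℓ, (αt ℓ k * y.2.2 ℓ j + (yt.2.2 ℓ j / ∑ r, yt.2.2 ℓ r)
              * ((∑ i, lam i k * y.1 i ℓ) - αt ℓ k * ∑ r, y.2.2 ℓ r)) ∧
      (∑ i, lam i k * y.2.1 i j)
          + (∑ ℓ, (αt ℓ k * y.2.2 ℓ j + (yt.2.2 ℓ j / ∑ r, yt.2.2 ℓ r)
              * ((∑ i, lam i k * y.1 i ℓ) - αt ℓ k * ∑ r, y.2.2 ℓ r)))
        ≤ lamax j k * ((∑ i, y.2.1 i j) + ∑ ℓ, y.2.2 ℓ j)) ↔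
    (∃ α : L → K → ℝ,
      (∀ (ℓ : L) (k : K),
        ∑ i, lam i k * y.1 i ℓ
          = αt ℓ k * (∑ j, y.2.2 ℓ j) + (α ℓ k - αt ℓ k) * ∑ j, yt.2.2 ℓ j) ∧
      ∀ (j : J) (k : K),
        lamin j k * ((∑ i, y.2.1 i j) + ∑ ℓ, y.2.2 ℓ j)
          ≤ (∑ i, lam i k * y.2.1 i j)
            + ∑ ℓ, (αt ℓ k * y.2.2 ℓ j + yt.2.2 ℓ j * (α ℓ k - αt ℓ k)) ∧
        (∑ i, lam i k * y.2.1 i j)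
            + (∑ ℓ, (αt ℓ k * y.2.2 ℓ j + yt.2.2 ℓ j * (α ℓ k - αt ℓ k)))
          ≤ lamax j k * ((∑ i, y.2.1 i j) + ∑ ℓ, y.2.2 ℓ j)) :=
  slp_dr_subproblems_equivalent_general lam lamin lamax yt hpos αt y
end

section
/- (Equivalence of the penalty formulations F^p and P^p.) Let y be a flow vector with all components nonnegative that satisfies the flow conservation constraints ∑_{i∈I} yIL_{iℓ} = ∑_{j∈J} yLJ_{ℓj} for all ℓ ∈ L, and let s^min, s^max : J × K → ℝ be nonnegative slack variables. Then the following are equivalent: (i) for all j ∈ J and k ∈ K, ∑_{i∈I} λ_{ik} yIJ_{ij} + ∑_{ℓ∈L} q_{ℓk}(y) · yLJ_{ℓj} + s^min_{jk} ≥ λmin_{jk} · (∑_{i∈I} yIJ_{ij} + ∑_{ℓ∈L} yLJ_{ℓj}) and ∑_{i∈I} λ_{ik} yIJ_{ij} + ∑_{ℓ∈L} q_{ℓk}(y) · yLJ_{ℓj} − s^max_{jk} ≤ λmax_{jk} · (∑_{i∈I} yIJ_{ij} + ∑_{ℓ∈L} yLJ_{ℓj}); (ii) there exists α : L × K → ℝ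 such that ∑_{i∈I} λ_{ik} yIL_{iℓ} = α_{ℓk} · ∑_{j∈J} yLJ_{ℓj} for all ℓ ∈ L, k ∈ K, and for all j ∈ J, k ∈ K the same two slacked inequalities hold with q_{ℓk}(y) replaced by α_{ℓk}. -/
open scoped BigOperators

/-- equivalence of the penalty formulations F^p and P^p: for a
nonnegative flow vector satisfying flow conservation and nonnegative slacks, the
slacked output-quality constraints expressed via the pool qualities `q_{ℓk}(y)` hold
iff there exist pool quality values `α` satisfying the pool material balances and
the same slacked constraints. -/
theorem penalty_formulations_equivalent
    {I L J K : Type*} [Fintype I] [Fintype L] [Fintype J]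
    [Nonempty I] [Nonempty L] [Nonempty J] [Nonempty K]
    (lam : I → K → ℝ) (lamin lamax : J → K → ℝ)
    (y : FlowVec I L J)
    (hy1 : ∀ i ℓ, 0 ≤ y.1 i ℓ) (hy2 : ∀ i j, 0 ≤ y.2.1 i j)
    (hy3 : ∀ ℓ j, 0 ≤ y.2.2 ℓ j)
    (hcons : ∀ ℓ, ∑ i, y.1 i ℓ = ∑ j, y.2.2 ℓ j)
    (smin smax : J → K → ℝ)
    (hsmin : ∀ j k, 0 ≤ smin j k) (hsmax : ∀ j k, 0 ≤ smax j k) :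
    (∀ (j : J) (k : K),
      lamin j k * ((∑ i, y.2.1 i j) + ∑ ℓ, y.2.2 ℓ j)
        ≤ (∑ i, lam i k * y.2.1 i j) + (∑ ℓ, poolQuality lam ℓ k y * y.2.2 ℓ j)
            + smin j k ∧
      (∑ i, lam i k * y.2.1 i j) + (∑ ℓ, poolQuality lam ℓ k y * y.2.2 ℓ j)
          - smax j k
        ≤ lamax j k * ((∑ i, y.2.1 i j) + ∑ ℓ, y.2.2 ℓ j)) ↔
    (∃ α : L → K → ℝ,
      (∀ (ℓ : L) (k : K), ∑ i, lam i k * y.1 i ℓ = α ℓ k * ∑ j, y.2.2 ℓ j) ∧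
      ∀ (j : J) (k : K),
        lamin j k * ((∑ i, y.2.1 i j) + ∑ ℓ, y.2.2 ℓ j)
          ≤ (∑ i, lam i k * y.2.1 i j) + (∑ ℓ, α ℓ k * y.2.2 ℓ j) + smin j k ∧
        (∑ i, lam i k * y.2.1 i j) + (∑ ℓ, α ℓ k * y.2.2 ℓ j) - smax j k
          ≤ lamax j k * ((∑ i, y.2.1 i j) + ∑ ℓ, y.2.2 ℓ j)) := by
  have hbal : ∀ (ℓ : L) (k : K),
      ∑ i, lam i k * y.1 i ℓ = poolQuality lam ℓ k y * ∑ j, y.2.2 ℓ j := by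
    intro ℓ k
    unfold poolQuality
    by_cases h : 0 < ∑ j, y.2.2 ℓ j
    · rw [if_pos h, div_mul_cancel₀ _ (ne_of_gt h)]
    · rw [if_neg h, zero_mul]
      have hz : ∑ j, y.2.2 ℓ j = 0 :=
        le_antisymm (not_lt.mp h) (Finset.sum_nonneg fun j _ => hy3 ℓ j)
      have hz' : ∑ i, y.1 i ℓ = 0 := (hcons ℓ).trans hz
      have : ∀ i ∈ Finset.univ, y.1 i ℓ = 0 :=
        (Finset.sum_eq_zero_iff_of_nonneg fun i _ => hy1 i ℓ).mp hz'
      exact Finset.sum_eq_zero fun i _ => by rw [this i (Finset.mem_univ i), mul_zero]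
  constructor
  · intro h
    exact ⟨fun ℓ k => poolQuality lam ℓ k y, hbal, h⟩
  · rintro ⟨α, hα, h⟩
    intro j k
    have key : ∑ ℓ, poolQuality lam ℓ k y * y.2.2 ℓ j = ∑ ℓ, α ℓ k * y.2.2 ℓ j := by
      refine Finset.sum_congr rfl fun ℓ _ => ?_
      by_cases hp : 0 < ∑ j', y.2.2 ℓ j'
      · have := (hbal ℓ k).symm.trans (hα ℓ k)
        have : poolQuality lam ℓ k y = α ℓ k :=
          mul_right_cancel₀ (ne_of_gt hp) this
        rw [this]
      · have hz : ∑ j', y.2.2 ℓ j' = 0 :=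
          le_antisymm (not_lt.mp hp) (Finset.sum_nonneg fun j' _ => hy3 ℓ j')
        have : y.2.2 ℓ j = 0 := by
          have := (Finset.sum_eq_zero_iff_of_nonneg fun j' _ => hy3 ℓ j').mp hz
          exact this j (Finset.mem_univ j)
        rw [this, mul_zero, mul_zero]
    rw [key]
    exact h j k
end
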